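/- arXiv:1210.7503 — 2 statements merged into one kernel-verified Lean document; each statement's English description precedes it below -/
import Mathlib

section
/- If X_1,...,X_n are drawn sequentially without replacement from a set of reals summing to 0, then the process M_k = X_1 X_2 + X_2 X_3 + ... + X_{k-1} X_k + (X_1+...+X_{k-1})(X_1+...+X_k)/(n-k), for 2 <= k <= n-1, is a martingale with respect to F_k = sigma(X_1,...,X_k). -/
open MeasureTheory Finset

noncomputable section

instance permMS (n : ℕ) : MeasurableSpace (Equiv.Perm (Fin n)) := ⊤

instance permNE (n : ℕ) : Nonempty (Equiv.Perm (Fin n)) := ⟨1⟩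

/-- uniform probability measure on the n! orderings: sampling without replacement. -/
def permMeasure (n : ℕ) : Measure (Equiv.Perm (Fin n)) :=
  (PMF.uniformOfFintype (Equiv.Perm (Fin n))).toMeasure

/-- `X n x i σ` : the `(i+1)`-st sample (0-based `i`) drawn without replacement. -/
def X (n : ℕ) (x : Fin n → ℝ) (i : ℕ) (σ : Equiv.Perm (Fin n)) : ℝ :=
  if h : i < n then x (σ ⟨i, h⟩) else 0

/-- partial sum `S_k = X_1 + ⋯ + X_k`. -/
def S (n : ℕ) (x : Fin n → ℝ) (k : ℕ) (σ : Equiv.Perm (Fin n)) : ℝ :=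
  ∑ i ∈ Finset.range k, X n x i σ

/-- partial sum of squares `T_k = X_1^2 + ⋯ + X_k^2`. -/
def T (n : ℕ) (x : Fin n → ℝ) (k : ℕ) (σ : Equiv.Perm (Fin n)) : ℝ :=
  ∑ i ∈ Finset.range k, (X n x i σ) ^ 2

/-- `F_k = σ(X_1, ..., X_k)`. -/
def F (n : ℕ) (x : Fin n → ℝ) (k : ℕ) : MeasurableSpace (Equiv.Perm (Fin n)) :=
  MeasurableSpace.comap (fun σ => fun i : Fin k => X n x i σ) inferInstance

/-!
Given the first `k` draws, the remaining `n - k` draws are exchangeable and sum to `-S_k`, so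
`E[X_{k+1} | F_k] = -S_k / (n - k)`. Since `M_{k+1}` is affine in `X_{k+1}` with
`F_k`-measurable coefficients, substituting this conditional mean gives back `M_k`.
-/

section

variable {n : ℕ} {x : Fin n → ℝ}

instance : DiscreteMeasurableSpace (Equiv.Perm (Fin n)) := ⟨fun _ => trivial⟩

instance : IsProbabilityMeasure (permMeasure n) := by
  unfold permMeasure; infer_instance

def M (n : ℕ) (x : Fin n → ℝ) (k : ℕ) (σ : Equiv.Perm (Fin n)) : ℝ :=
  (∑ i ∈ range (k - 1), X n x i σ * X n x (i + 1) σ)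
    + S n x (k - 1) σ * S n x k σ / ((n : ℝ) - k)

theorem S_succ (k : ℕ) (σ : Equiv.Perm (Fin n)) : S n x (k + 1) σ = S n x k σ + X n x k σ :=
  sum_range_succ _ k

theorem integral_comp_mul_right (g : Equiv.Perm (Fin n) → ℝ) (τ : Equiv.Perm (Fin n)) :
    ∫ σ, g (σ * τ) ∂permMeasure n = ∫ σ, g σ ∂permMeasure n := by
  simp only [permMeasure, PMF.integral_eq_sum, PMF.uniformOfFintype_apply]
  exact Fintype.sum_equiv (Equiv.mulRight τ) _ _ fun _ => rfl

theorem X_mul_of_fixes {k i : ℕ} (hi : i < k) {τ : Equiv.Perm (Fin n)}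
    (hτ : ∀ m : Fin n, (m : ℕ) < k → τ m = m) (σ : Equiv.Perm (Fin n)) :
    X n x i (σ * τ) = X n x i σ := by
  unfold X
  split_ifs with h
  · rw [Equiv.Perm.mul_apply, hτ ⟨i, h⟩ hi]
  · rfl

theorem mem_mul_iff_of_measurableSet_F {k : ℕ} {s : Set (Equiv.Perm (Fin n))}
    (hs : MeasurableSet[F n x k] s) {τ : Equiv.Perm (Fin n)}
    (hτ : ∀ m : Fin n, (m : ℕ) < k → τ m = m) (σ : Equiv.Perm (Fin n)) :
    σ * τ ∈ s ↔ σ ∈ s := by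
  obtain ⟨A, -, rfl⟩ := MeasurableSpace.measurableSet_comap.1 hs
  simp only [Set.mem_preimage, X_mul_of_fixes (Fin.is_lt _) hτ]

theorem measurable_X_F {k i : ℕ} (hi : i < k) : Measurable[F n x k] (X n x i) :=
  (measurable_pi_apply (⟨i, hi⟩ : Fin k)).comp (comap_measurable fun σ (j : Fin k) => X n x j σ)

theorem measurable_S_F {k m : ℕ} (hm : m ≤ k) : Measurable[F n x k] (S n x m) :=
  Finset.measurable_sum _ fun _ hi => measurable_X_F ((mem_range.1 hi).trans_le hm)

theorem measurable_M_F (k : ℕ) : Measurable[F n x k] (M n x k) := by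
  refine .add (Finset.measurable_sum _ fun i hi => ?_) ?_
  · have := mem_range.1 hi
    exact (measurable_X_F (by omega)).mul (measurable_X_F (by omega))
  · exact ((measurable_S_F (Nat.sub_le k 1)).mul (measurable_S_F le_rfl)).div_const _

theorem sum_Ico_X (hx : ∑ i, x i = 0) {k : ℕ} (hk : k ≤ n) (σ : Equiv.Perm (Fin n)) :
    ∑ j ∈ Ico k n, X n x j σ = -S n x k σ := by
  have htotal : ∑ j ∈ range n, X n x j σ = 0 := by
    rw [← Fin.sum_univ_eq_sum_range, ← hx, ← Equiv.sum_comp σ x]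
    exact Finset.sum_congr rfl fun i _ => dif_pos i.2
  rw [← sum_range_add_sum_Ico _ hk] at htotal
  rw [S]; linarith

/-- Right multiplication by the transposition of positions `k` and `j` preserves the uniform
measure and every set of `F n x k`, and turns `X n x j` into `X n x k`. -/
theorem setIntegral_X_eq_of_le {k j : ℕ} (hkj : k ≤ j) (hj : j < n)
    {s : Set (Equiv.Perm (Fin n))} (hs : MeasurableSet[F n x k] s) :
    ∫ σ in s, X n x j σ ∂permMeasure n = ∫ σ in s, X n x k σ ∂permMeasure n := by
  have hk : k < n := hkj.trans_lt hj
  obtain ⟨τ, hτj, hτ⟩ : ∃ τ : Equiv.Perm (Fin n),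
      τ ⟨j, hj⟩ = ⟨k, hk⟩ ∧ ∀ m : Fin n, (m : ℕ) < k → τ m = m :=
    ⟨Equiv.swap ⟨k, hk⟩ ⟨j, hj⟩, Equiv.swap_apply_right _ _, fun m hm =>
      Equiv.swap_apply_of_ne_of_ne (Fin.ne_of_val_ne (show (m : ℕ) ≠ k by omega))
        (Fin.ne_of_val_ne (show (m : ℕ) ≠ j by omega))⟩
  rw [← integral_indicator .of_discrete, ← integral_indicator .of_discrete,
    ← integral_comp_mul_right _ τ]
  refine integral_congr_ae (ae_of_all _ fun σ => ?_)
  have hX : X n x j (σ * τ) = X n x k σ := by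
    simp only [X, dif_pos hj, dif_pos hk, Equiv.Perm.mul_apply, hτj]
  classical
  simp only [Set.indicator_apply, mem_mul_iff_of_measurableSet_F hs hτ, hX]

theorem mul_setIntegral_X_eq (hx : ∑ i, x i = 0) {k : ℕ} (hk : k < n)
    {s : Set (Equiv.Perm (Fin n))} (hs : MeasurableSet[F n x k] s) :
    ((n : ℝ) - k) * ∫ σ in s, X n x k σ ∂permMeasure n
      = ∫ σ in s, -S n x k σ ∂permMeasure n := by
  calc ((n : ℝ) - k) * ∫ σ in s, X n x k σ ∂permMeasure n
      = ∑ j ∈ Ico k n, ∫ σ in s, X n x j σ ∂permMeasure n := by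
        rw [Finset.sum_congr rfl fun j hj =>
          setIntegral_X_eq_of_le (mem_Ico.1 hj).1 (mem_Ico.1 hj).2 hs, sum_const,
          Nat.card_Ico, nsmul_eq_mul, Nat.cast_sub hk.le]
    _ = ∫ σ in s, -S n x k σ ∂permMeasure n := by
        rw [← integral_finsetSum _ fun j _ => Integrable.of_finite]
        simp only [sum_Ico_X hx hk.le]

theorem condExp_X (hx : ∑ i, x i = 0) {k : ℕ} (hk : k < n) :
    (permMeasure n)[X n x k | F n x k]
      =ᵐ[permMeasure n] fun σ => -S n x k σ / ((n : ℝ) - k) := by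
  have hnk : (n : ℝ) - k ≠ 0 := sub_ne_zero.2 (by exact_mod_cast hk.ne')
  refine Filter.EventuallyEq.symm <| ae_eq_condExp_of_forall_setIntegral_eq le_top
    Integrable.of_finite (fun _ _ _ => Integrable.of_finite.integrableOn) (fun s hs _ => ?_)
    ((measurable_S_F le_rfl).neg.div_const _).stronglyMeasurable.aestronglyMeasurable
  rw [integral_div, div_eq_iff hnk, ← mul_setIntegral_X_eq hx hk hs, mul_comm]

theorem condExp_M_succ (hx : ∑ i, x i = 0) {k : ℕ} (hk : 1 ≤ k) (hkn : k + 2 ≤ n) :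
    (permMeasure n)[M n x (k + 1) | F n x k] =ᵐ[permMeasure n] M n x k := by
  obtain ⟨m, rfl⟩ : ∃ m, k = m + 1 := ⟨k - 1, by omega⟩
  have hn₁ : (n : ℝ) - (m + 1) ≠ 0 := sub_ne_zero.2 (by exact_mod_cast (by omega : n ≠ m + 1))
  have hn₂ : (n : ℝ) - (m + 2) ≠ 0 := sub_ne_zero.2 (by exact_mod_cast (by omega : n ≠ m + 2))
  set G : Equiv.Perm (Fin n) → ℝ := fun σ => M n x (m + 1) σ
    + S n x (m + 1) σ ^ 2 / ((n : ℝ) - (m + 2)) - S n x m σ * S n x (m + 1) σ / ((n : ℝ) - (m + 1))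
  set H : Equiv.Perm (Fin n) → ℝ := fun σ => X n x m σ + S n x (m + 1) σ / ((n : ℝ) - (m + 2))
  have hsplit : M n x (m + 2) = G + H * X n x (m + 1) := by
    funext σ
    simp only [M, G, H, Pi.add_apply, Pi.mul_apply, show m + 2 - 1 = m + 1 by omega,
      Nat.add_sub_cancel, sum_range_succ _ m, S_succ (m + 1)]
    push_cast
    field_simp
    ring
  have hG : StronglyMeasurable[F n x (m + 1)] G :=
    (((measurable_M_F _).add ((measurable_S_F le_rfl).pow_const 2 |>.div_const _)).sub
      (((measurable_S_F m.le_succ).mul (measurable_S_F le_rfl)).div_const _)).stronglyMeasurable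
  have hH : StronglyMeasurable[F n x (m + 1)] H :=
    ((measurable_X_F m.lt_succ_self).add
      ((measurable_S_F le_rfl).div_const _)).stronglyMeasurable
  calc (permMeasure n)[M n x (m + 2) | F n x (m + 1)]
      = (permMeasure n)[G + H * X n x (m + 1) | F n x (m + 1)] := by rw [hsplit]
    _ =ᵐ[permMeasure n] (permMeasure n)[G | F n x (m + 1)]
          + (permMeasure n)[H * X n x (m + 1) | F n x (m + 1)] :=
        condExp_add .of_finite .of_finite _
    _ =ᵐ[permMeasure n] G + H * (permMeasure n)[X n x (m + 1) | F n x (m + 1)] := by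
        rw [condExp_of_stronglyMeasurable le_top hG .of_finite]
        exact Filter.EventuallyEq.rfl.add
          (condExp_mul_of_stronglyMeasurable_left hH .of_finite .of_finite)
    _ =ᵐ[permMeasure n] G + H * fun σ => -S n x (m + 1) σ / ((n : ℝ) - (m + 1 : ℕ)) :=
        Filter.EventuallyEq.rfl.add (Filter.EventuallyEq.rfl.mul (condExp_X hx (by omega)))
    _ = M n x (m + 1) := by
        funext σ
        simp only [M, G, H, Pi.add_apply, Pi.mul_apply, Nat.add_sub_cancel, S_succ m]
        push_cast
        field_simp
        ring

end

theorem statement5 (n : ℕ) (x : Fin n → ℝ) (hx : ∑ i, x i = 0)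
    (Mart : ℕ → Equiv.Perm (Fin n) → ℝ)
    (hMart : ∀ k σ, Mart k σ =
      (∑ i ∈ Finset.range (k - 1), X n x i σ * X n x (i + 1) σ)
        + S n x (k - 1) σ * S n x k σ / ((n : ℝ) - k)) :
    (∀ k, 2 ≤ k → k ≤ n - 1 → StronglyMeasurable[F n x k] (Mart k)) ∧
    (∀ k, 2 ≤ k → k + 1 ≤ n - 1 →
      (permMeasure n)[Mart (k + 1)|F n x k] =ᵐ[permMeasure n] Mart k) := by
  obtain rfl : Mart = M n x := funext₂ hMart
  exact ⟨fun k _ _ => (measurable_M_F k).stronglyMeasurable,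
    fun k hk hkn => condExp_M_succ hx (by omega) (by omega)⟩

end
end

section
/- For a uniformly random ordering X_1,...,X_{2m} of m copies of +1 and m copies of -1, with S_k = X_1+...+X_k, one has E[S_m^2] = m^2/(2m-1) and E[S_m^4] = (3m^4 - 4m^3)/(4m^2 - 8m + 3), provided m >= 2. -/
open MeasureTheory Finset

noncomputable section

/-!
Given `S_k`, the draws after position `k` are exchangeable and sum to `-S_k`, so
`E[f(S_k) X_{k+1}] = -E[f(S_k) S_k] / (n - k)`. Since `X_{k+1}² = 1`, expanding
`(S_k + X_{k+1})²` and `(S_k + X_{k+1})⁴` gives first-order recursions in `k` for `E[S_k²]`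
and `E[S_k⁴]`, whose solutions are `(n - 1) E[S_k²] = k (n - k)` and an explicit polynomial
for `(n - 1)(n - 3) E[S_k⁴]`; take `n = 2m`, `k = m`.
-/

open Equiv

lemma integral_permMeasure {n : ℕ} (f : Perm (Fin n) → ℝ) :
    ∫ σ, f σ ∂(permMeasure n) = (∑ σ, f σ) / n.factorial := by
  rw [permMeasure, integral_fintype .of_finite]
  simp [measureReal_def, Fintype.card_perm, div_eq_inv_mul, mul_sum]

namespace SamplingWithoutReplacement

variable {n : ℕ} {x : Fin n → ℝ}

lemma X_mul {i : ℕ} (hi : i < n) (σ τ : Perm (Fin n)) :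
    X n x i (σ * τ) = x (σ (τ ⟨i, hi⟩)) := by
  simp [X, hi]

lemma S_succ (k : ℕ) (σ : Perm (Fin n)) : S n x (k + 1) σ = S n x k σ + X n x k σ :=
  sum_range_succ _ _

lemma S_self (σ : Perm (Fin n)) : S n x n σ = ∑ i, x i := by
  rw [S, ← Fin.sum_univ_eq_sum_range (X n x · σ), ← Equiv.sum_comp σ x]
  simp [X]

lemma sum_Ico_X {k : ℕ} (hk : k ≤ n) (σ : Perm (Fin n)) :
    ∑ l ∈ Ico k n, X n x l σ = ∑ i, x i - S n x k σ := by
  rw [← S_self σ, S, S, ← sum_range_add_sum_Ico _ hk, add_sub_cancel_left]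

lemma X_sq (hx : ∀ i, x i ^ 2 = 1) {k : ℕ} (hk : k < n) (σ : Perm (Fin n)) :
    X n x k σ ^ 2 = 1 := by
  simp [X, hk, hx]

lemma S_mul_swap {k : ℕ} {a b : Fin n} (ha : k ≤ a) (hb : k ≤ b) (σ : Perm (Fin n)) :
    S n x k (σ * swap a b) = S n x k σ := by
  refine sum_congr rfl fun i hi => ?_
  have hik : i < k := mem_range.mp hi
  by_cases hin : i < n
  · rw [X_mul hin, X, dif_pos hin, swap_apply_of_ne_of_ne] <;>
      exact Fin.ne_of_val_ne (by dsimp only; omega)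
  · simp [X, hin]

/-- Exchangeability: relabelling by the transposition of positions `k` and `l` fixes `S_k`. -/
lemma sum_mul_X_eq (f : ℝ → ℝ) {k l : ℕ} (hkl : k ≤ l) (hl : l < n) :
    ∑ σ, f (S n x k σ) * X n x l σ = ∑ σ, f (S n x k σ) * X n x k σ := by
  have hk : k < n := hkl.trans_lt hl
  rw [← Equiv.sum_comp (Equiv.mulRight (swap ⟨k, hk⟩ ⟨l, hl⟩))]
  refine sum_congr rfl fun σ _ => ?_
  rw [coe_mulRight, S_mul_swap (a := ⟨k, hk⟩) (b := ⟨l, hl⟩) le_rfl hkl, X_mul hl,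
    swap_apply_right, X, dif_pos hk]

/-- Since the whole sample sums to `0`, the next draw is `-S_k / (n - k)` on average given `S_k`. -/
lemma sub_mul_sum_mul_X (hx : ∑ i, x i = 0) (f : ℝ → ℝ) {k : ℕ} (hk : k ≤ n) :
    ((n : ℝ) - k) * ∑ σ, f (S n x k σ) * X n x k σ
      = -∑ σ, f (S n x k σ) * S n x k σ := by
  calc ((n : ℝ) - k) * ∑ σ, f (S n x k σ) * X n x k σ
      = ∑ l ∈ Ico k n, ∑ σ, f (S n x k σ) * X n x k σ := by
        rw [sum_const, Nat.card_Ico, nsmul_eq_mul, Nat.cast_sub hk]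
    _ = ∑ l ∈ Ico k n, ∑ σ, f (S n x k σ) * X n x l σ :=
        sum_congr rfl fun l hl => (sum_mul_X_eq f (mem_Ico.mp hl).1 (mem_Ico.mp hl).2).symm
    _ = ∑ σ, f (S n x k σ) * ∑ l ∈ Ico k n, X n x l σ := by
        rw [sum_comm]; simp only [mul_sum]
    _ = -∑ σ, f (S n x k σ) * S n x k σ := by
        simp only [sum_Ico_X hk, hx, zero_sub, mul_neg, sum_neg_distrib]

variable (hx₀ : ∑ i, x i = 0) (hx₁ : ∀ i, x i ^ 2 = 1)
include hx₀ hx₁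

lemma sub_mul_sum_S_succ_sq {k : ℕ} (hk : k < n) :
    ((n : ℝ) - k) * ∑ σ, S n x (k + 1) σ ^ 2
      = ((n : ℝ) - k - 2) * ∑ σ, S n x k σ ^ 2 + ((n : ℝ) - k) * n.factorial := by
  have hstep : ∀ σ, S n x (k + 1) σ ^ 2 = S n x k σ ^ 2 + 2 * (S n x k σ * X n x k σ) + 1 :=
    fun σ => by rw [S_succ]; linear_combination X_sq hx₁ hk σ
  have hmean := sub_mul_sum_mul_X hx₀ id hk.le
  simp only [id, ← sq] at hmean
  simp only [hstep, sum_add_distrib, ← mul_sum, sum_const, card_univ, Fintype.card_perm,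
    Fintype.card_fin, nsmul_eq_mul, mul_one]
  linear_combination 2 * hmean

lemma sub_mul_sum_S_succ_pow_four {k : ℕ} (hk : k < n) :
    ((n : ℝ) - k) * ∑ σ, S n x (k + 1) σ ^ 4
      = ((n : ℝ) - k - 4) * ∑ σ, S n x k σ ^ 4
        + (6 * ((n : ℝ) - k) - 4) * ∑ σ, S n x k σ ^ 2 + ((n : ℝ) - k) * n.factorial := by
  have hstep : ∀ σ, S n x (k + 1) σ ^ 4 = S n x k σ ^ 4 + 4 * (S n x k σ ^ 3 * X n x k σ)
      + 6 * S n x k σ ^ 2 + 4 * (S n x k σ * X n x k σ) + 1 := fun σ => by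
    rw [S_succ]
    linear_combination (6 * S n x k σ ^ 2 + 4 * S n x k σ * X n x k σ + X n x k σ ^ 2 + 1)
      * X_sq hx₁ hk σ
  have hmean₁ := sub_mul_sum_mul_X hx₀ id hk.le
  have hmean₃ := sub_mul_sum_mul_X hx₀ (· ^ 3) hk.le
  simp only [id, ← sq, ← pow_succ] at hmean₁ hmean₃
  simp only [hstep, sum_add_distrib, ← mul_sum, sum_const, card_univ, Fintype.card_perm,
    Fintype.card_fin, nsmul_eq_mul, mul_one]
  linear_combination 4 * hmean₃ + 4 * hmean₁

lemma sub_one_mul_sum_S_sq {k : ℕ} (hk : k ≤ n) :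
    ((n : ℝ) - 1) * ∑ σ, S n x k σ ^ 2 = n.factorial * k * (n - k) := by
  induction k with
  | zero => simp [S]
  | succ k ih =>
    have hk' : k < n := hk
    have hnk : (n : ℝ) - k ≠ 0 := sub_ne_zero.mpr (by exact_mod_cast hk'.ne')
    refine mul_left_cancel₀ hnk ?_
    push_cast
    linear_combination ((n : ℝ) - 1) * sub_mul_sum_S_succ_sq hx₀ hx₁ hk'
      + ((n : ℝ) - k - 2) * ih hk'.le

lemma sub_one_mul_sub_three_mul_sum_S_pow_four {k : ℕ} (hk : k ≤ n) :
    ((n : ℝ) - 1) * (n - 3) * ∑ σ, S n x k σ ^ 4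
      = n.factorial * ((n - 1) * (n - 3) * (3 * k ^ 2 - 2 * k) - (n - 3) * k * (k - 1) * (6 * k - 8)
          + 3 * k * (k - 1) * (k - 2) * (k - 3)) := by
  induction k with
  | zero => simp [S]
  | succ k ih =>
    have hk' : k < n := hk
    have hnk : (n : ℝ) - k ≠ 0 := sub_ne_zero.mpr (by exact_mod_cast hk'.ne')
    refine mul_left_cancel₀ hnk ?_
    push_cast
    linear_combination ((n : ℝ) - 1) * (n - 3) * sub_mul_sum_S_succ_pow_four hx₀ hx₁ hk'
      + ((n : ℝ) - k - 4) * ih hk'.le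
      + (n - 3) * (6 * ((n : ℝ) - k) - 4) * sub_one_mul_sum_S_sq hx₀ hx₁ hk'.le

end SamplingWithoutReplacement

open SamplingWithoutReplacement

theorem statement15_general (m : ℕ)
    (x : Fin (2 * m) → ℝ) (hx : ∀ i : Fin (2 * m), x i = if (i : ℕ) < m then 1 else -1) :
    ∫ σ, (S (2 * m) x m σ) ^ 2 ∂(permMeasure (2 * m))
        = (m : ℝ) ^ 2 / (2 * (m : ℝ) - 1) ∧
    ∫ σ, (S (2 * m) x m σ) ^ 4 ∂(permMeasure (2 * m))
        = (3 * (m : ℝ) ^ 4 - 4 * (m : ℝ) ^ 3) / (4 * (m : ℝ) ^ 2 - 8 * (m : ℝ) + 3) := by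
  have hx₁ : ∀ i, x i ^ 2 = 1 := fun i => by rw [hx]; split_ifs <;> norm_num
  have hx₀ : ∑ i, x i = 0 := by
    rw [sum_congr rfl fun i _ => hx i,
      Fin.sum_univ_eq_sum_range (fun i => if i < m then (1 : ℝ) else -1), two_mul,
      sum_range_add, sum_congr rfl fun i hi => if_pos (mem_range.mp hi)]
    simp
  have h₂ := sub_one_mul_sum_S_sq hx₀ hx₁ (k := m) (by omega)
  have h₄ := sub_one_mul_sub_three_mul_sum_S_pow_four hx₀ hx₁ (k := m) (by omega)
  push_cast at h₂ h₄
  have hN : ((2 * m).factorial : ℝ) ≠ 0 := by positivity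
  have h₁ : 2 * (m : ℝ) - 1 ≠ 0 :=
    sub_ne_zero.mpr (by exact_mod_cast (by omega : 2 * m ≠ 1))
  have h₃ : 2 * (m : ℝ) - 3 ≠ 0 :=
    sub_ne_zero.mpr (by exact_mod_cast (by omega : 2 * m ≠ 3))
  rw [integral_permMeasure, integral_permMeasure]
  constructor
  · rw [div_eq_div_iff hN h₁]
    linear_combination h₂
  · have h₁₃ : 4 * (m : ℝ) ^ 2 - 8 * m + 3 = (2 * m - 1) * (2 * m - 3) := by ring
    rw [div_eq_div_iff hN (h₁₃ ▸ mul_ne_zero h₁ h₃)]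
    linear_combination h₄

theorem statement15 (m : ℕ) (hm : 2 ≤ m)
    (x : Fin (2 * m) → ℝ) (hx : ∀ i : Fin (2 * m), x i = if (i : ℕ) < m then 1 else -1) :
    ∫ σ, (S (2 * m) x m σ) ^ 2 ∂(permMeasure (2 * m))
        = (m : ℝ) ^ 2 / (2 * (m : ℝ) - 1) ∧
    ∫ σ, (S (2 * m) x m σ) ^ 4 ∂(permMeasure (2 * m))
        = (3 * (m : ℝ) ^ 4 - 4 * (m : ℝ) ^ 3) / (4 * (m : ℝ) ^ 2 - 8 * (m : ℝ) + 3) :=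
  statement15_general m x hx

end
end
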